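/- arXiv:2501.08713 — 5 statements merged into one kernel-verified Lean document; each statement's English description precedes it below -/
import Mathlib

section
/- Let m be a natural number and let δ₁ ≤ δ₂ be ordinals with δ₂ < ω^m. Then there exists a finite list of natural numbers i₀, i₁, …, i_{n-1}, each strictly less than m, such that δ₁ + ω^{i₀} + ω^{i₁} + ⋯ + ω^{i_{n-1}} = δ₂, and moreover every partial sum δ₁ + ω^{i₀} + ⋯ + ω^{i_{j}} is at most δ₂. -/
/-!
Every `γ < ω ^ m` is a finite sum of powers `ω ^ i` with `i < m`: dividing by `ω ^ (m - 1)`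
leaves a natural-number quotient and a smaller remainder (the Cantor normal form). Applying this
to `γ = δ₂ - δ₁` reaches `δ₂` from `δ₁`; the partial sums stay below `δ₂` because `δ₁ + ·` is
monotone and a prefix sum is at most the whole sum.
-/

theorem List.foldl_add_eq_add_sum_map {ι M : Type*} [AddMonoid M] (g : ι → M) (a : M) (l : List ι) :
    l.foldl (fun s i => s + g i) a = a + (l.map g).sum := by
  induction l generalizing a with
  | nil => simp
  | cons i l ih => simp [ih, add_assoc]

theorem List.IsPrefix.sum_le {M : Type*} [AddMonoid M] [PartialOrder M] [CanonicallyOrderedAdd M]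
    {t l : List M} (h : t <+: l) : t.sum ≤ l.sum := by
  obtain ⟨r, rfl⟩ := h
  simp

namespace Ordinal

theorem exists_list_sum_map_omega0_opow_eq {m : ℕ} {γ : Ordinal} (hγ : γ < ω ^ (m : Ordinal)) :
    ∃ l : List ℕ, (∀ i ∈ l, i < m) ∧ (l.map fun i : ℕ => ω ^ (i : Ordinal)).sum = γ := by
  induction m generalizing γ with
  | zero => exact ⟨[], by simp, by simpa [eq_comm] using hγ⟩
  | succ m ih =>
    have hω : ω ^ (m : Ordinal) ≠ 0 := (opow_pos _ omega0_pos).ne'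
    obtain ⟨k, hk⟩ : ∃ k : ℕ, γ / ω ^ (m : Ordinal) = k := by
      refine lt_omega0.mp ((lt_mul_iff_div_lt hω).mp ?_)
      rwa [← opow_succ, Order.succ_eq_add_one, ← Nat.cast_succ]
    obtain ⟨l, hl, hsum⟩ := ih (mod_lt γ hω)
    refine ⟨List.replicate k m ++ l, ?_, ?_⟩
    · simp only [List.mem_append, List.mem_replicate]
      rintro i (⟨-, rfl⟩ | hi)
      exacts [Nat.lt_add_one _, (hl i hi).trans (Nat.lt_add_one m)]
    · rw [List.map_append, List.sum_append, hsum, List.map_replicate, List.sum_replicate,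
        nsmul_eq_mul, ← hk, div_add_mod]

end Ordinal

open Ordinal

/-- For ordinals `δ₁ ≤ δ₂ < ω^m`, the ordinal `δ₂` can be reached from `δ₁` by
successively adding powers `ω^i` with `i < m`, with all partial sums at most `δ₂`. -/
theorem ordinal_reach_by_omega_powers (m : ℕ) (δ₁ δ₂ : Ordinal)
    (h₁ : δ₁ ≤ δ₂) (h₂ : δ₂ < Ordinal.omega0 ^ (m : Ordinal)) :
    ∃ l : List ℕ, (∀ i ∈ l, i < m) ∧
      l.foldl (fun (s : Ordinal) (i : ℕ) => s + Ordinal.omega0 ^ (i : Ordinal)) δ₁ = δ₂ ∧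
      ∀ t : List ℕ, t <+: l →
        t.foldl (fun (s : Ordinal) (i : ℕ) => s + Ordinal.omega0 ^ (i : Ordinal)) δ₁ ≤ δ₂ := by
  obtain ⟨l, hl, hsum⟩ :=
    exists_list_sum_map_omega0_opow_eq ((sub_le_self δ₂ δ₁).trans_lt h₂)
  have hreach : l.foldl (fun (s : Ordinal) (i : ℕ) => s + ω ^ (i : Ordinal)) δ₁ = δ₂ := by
    rw [List.foldl_add_eq_add_sum_map, hsum, Ordinal.add_sub_cancel_of_le h₁]
  refine ⟨l, hl, hreach, fun t ht => ?_⟩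
  rw [← hreach, List.foldl_add_eq_add_sum_map, List.foldl_add_eq_add_sum_map]
  exact add_le_add_right (ht.map _).sum_le δ₁
end

section
/- (Positional determinacy of parity games) Let G = (V_I, V_II, E, c) be a parity game: V = V_I ⊎ V_II, every vertex has at least one outgoing E-edge, and c : V → Fin d is a coloring. Then the winning regions of the two players partition V, and each player has a uniform memoryless winning strategy: a function s mapping each of her vertices to an out-neighbour, such that every play consistent with s starting from any vertex of her winning region is winning for her. -/
/-- A parity game: `VI` are player I's vertices (player II owns the complement),
`E` is the edge relation and `col` the coloring. -/
structure PGame (V : Type*) where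
  VI : Set V
  E : V → V → Prop
  col : V → ℕ

namespace PGame

variable {V : Type*}

/-- An infinite `E`-path. -/
def IsPlay (G : PGame V) (p : ℕ → V) : Prop := ∀ n, G.E (p n) (p (n + 1))

/-- A play is winning for player I if the least color occurring infinitely often is even. -/
def WinsI (G : PGame V) (p : ℕ → V) : Prop :=
  ∃ i, Even i ∧ {n | G.col (p n) = i}.Infinite ∧ ∀ j < i, {n | G.col (p n) = j}.Finite

/-- The history `p 0, …, p n` of a play. -/
def hist (p : ℕ → V) (n : ℕ) : List V := List.ofFn fun i : Fin (n + 1) => p i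

/-- A (general) strategy for player I produces legal moves. -/
def LegalI (G : PGame V) (s : List V → V) : Prop :=
  ∀ h v, h.getLast? = some v → v ∈ G.VI → G.E v (s h)

/-- A play from `v` consistent with player I's strategy `s`. -/
def ConsI (G : PGame V) (s : List V → V) (v : V) (p : ℕ → V) : Prop :=
  p 0 = v ∧ G.IsPlay p ∧ ∀ n, p n ∈ G.VI → p (n + 1) = s (hist p n)

/-- `v` is in the winning region of player I. -/
def WinRegI (G : PGame V) (v : V) : Prop :=
  ∃ s, G.LegalI s ∧ ∀ p, G.ConsI s v p → G.WinsI p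

def LegalII (G : PGame V) (s : List V → V) : Prop :=
  ∀ h v, h.getLast? = some v → v ∉ G.VI → G.E v (s h)

def ConsII (G : PGame V) (s : List V → V) (v : V) (p : ℕ → V) : Prop :=
  p 0 = v ∧ G.IsPlay p ∧ ∀ n, p n ∉ G.VI → p (n + 1) = s (hist p n)

/-- `v` is in the winning region of player II (a play not winning for I is winning for II). -/
def WinRegII (G : PGame V) (v : V) : Prop :=
  ∃ s, G.LegalII s ∧ ∀ p, G.ConsII s v p → ¬ G.WinsI p

end PGame

/-!
Induction on the number of colours, for subgames on a set `U` of vertices. Call a set a paradise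
of player II if player I cannot leave it and player II wins on it with a positional strategy.
Well-ordering all paradises, each vertex follows the strategy of the least paradise containing
it; along a play these indices decrease, so they stabilise and the union `P` of all paradises is
again a paradise. Being the largest one, `P` absorbs player II's attractor to it. In `Z = U \ P`
remove player I's attractor `A` to the colour-`0` vertices. Colour `0` does not occur in the rest
`S`, so lowering all colours by one and swapping the players gives a game with fewer colours on
`S`. Player II's winning region there would enlarge `P`, hence it is empty and player I wins on
all of `S` positionally. Together with the attractor strategy on `A` she wins from all of `Z`: a
play visits `A`, and hence colour `0`, infinitely often, or it eventually stays in `S`.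
-/

open Set Filter

universe u

namespace PGame

variable {V : Type u}

section Histories

lemma hist_succ (p : ℕ → V) (n : ℕ) : hist p (n + 1) = hist p n ++ [p (n + 1)] := by
  rw [hist, List.ofFn_succ', List.concat_eq_append]
  rfl

lemma getLast?_hist (p : ℕ → V) (n : ℕ) : (hist p n).getLast? = some (p n) := by
  cases n with
  | zero => rfl
  | succ n => rw [hist_succ, List.getLast?_append_cons]; rfl

lemma exists_succ_eq_hist (F : List V → V) (x : V) :
    ∃ p : ℕ → V, p 0 = x ∧ ∀ n, p (n + 1) = F (hist p n) := by
  let h : ℕ → List V := fun n => Nat.rec [x] (fun _ l => l ++ [F l]) n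
  let p : ℕ → V := fun n => Nat.rec x (fun n _ => F (h n)) n
  have hh : ∀ n, h n = hist p n := by
    intro n
    induction n with
    | zero => rfl
    | succ n ih => rw [hist_succ, ← ih]
  exact ⟨p, rfl, fun n => by rw [← hh]⟩

lemma exists_consI_consII {G : PGame V} {s₁ s₂ : List V → V} (hs₁ : G.LegalI s₁)
    (hs₂ : G.LegalII s₂) (v : V) : ∃ p, G.ConsI s₁ v p ∧ G.ConsII s₂ v p := by
  classical
  obtain ⟨p, hp0, hp⟩ :=
    exists_succ_eq_hist (fun h => if h.getLast?.getD v ∈ G.VI then s₁ h else s₂ h) v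
  simp only [getLast?_hist, Option.getD_some] at hp
  have hplay : G.IsPlay p := fun n => by
    by_cases hn : p n ∈ G.VI
    · rw [hp, if_pos hn]; exact hs₁ _ _ (getLast?_hist p n) hn
    · rw [hp, if_neg hn]; exact hs₂ _ _ (getLast?_hist p n) hn
  exact ⟨p, ⟨hp0, hplay, fun n hn => by rw [hp, if_pos hn]⟩,
    ⟨hp0, hplay, fun n hn => by rw [hp, if_neg hn]⟩⟩

lemma not_winRegI_and_winRegII (G : PGame V) (v : V) : ¬(G.WinRegI v ∧ G.WinRegII v) := by
  rintro ⟨⟨s₁, hs₁, hwin₁⟩, ⟨s₂, hs₂, hwin₂⟩⟩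
  obtain ⟨p, hp₁, hp₂⟩ := exists_consI_consII hs₁ hs₂ v
  exact hwin₂ p hp₂ (hwin₁ p hp₁)

end Histories

def Follows (C : Set V) (σ : V → V) (p : ℕ → V) : Prop :=
  ∀ n, p n ∈ C → p (n + 1) = σ (p n)

lemma Follows.mono {C D : Set V} {σ : V → V} {p : ℕ → V} (h : Follows C σ p) (hDC : D ⊆ C) :
    Follows D σ p :=
  fun n hn => h n (hDC hn)

lemma Follows.shift {C : Set V} {σ : V → V} {p : ℕ → V} (h : Follows C σ p) (m : ℕ) :
    Follows C σ (fun k => p (m + k)) :=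
  fun k => h (m + k)

section Positional

variable (G : PGame V) {σ : V → V} {v : V}

lemma winRegI_of_positional (hσ : ∀ w ∈ G.VI, G.E w (σ w))
    (hwin : ∀ p, p 0 = v → G.IsPlay p → Follows G.VI σ p → G.WinsI p) : G.WinRegI v := by
  refine ⟨fun h => σ (h.getLast?.getD v), fun h w hw hwI => ?_, fun p ⟨hp0, hp, hf⟩ => ?_⟩
  · simpa [hw] using hσ w hwI
  · exact hwin p hp0 hp fun n hn => by simpa [getLast?_hist] using hf n hn

lemma winRegII_of_positional (hσ : ∀ w ∉ G.VI, G.E w (σ w))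
    (hwin : ∀ p, p 0 = v → G.IsPlay p → Follows G.VIᶜ σ p → ¬G.WinsI p) : G.WinRegII v := by
  refine ⟨fun h => σ (h.getLast?.getD v), fun h w hw hwI => ?_, fun p ⟨hp0, hp, hf⟩ => ?_⟩
  · simpa [hw] using hσ w hwI
  · exact hwin p hp0 hp fun n hn => by simpa [getLast?_hist] using hf n hn

end Positional

section Winning

variable (G : PGame V)

def infColors (p : ℕ → V) : Set ℕ := {i | ∃ᶠ n in atTop, G.col (p n) = i}

variable {G}

lemma winsI_iff_isLeast {p : ℕ → V} : G.WinsI p ↔ ∃ i, Even i ∧ IsLeast (G.infColors p) i := by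
  simp only [WinsI, infColors, IsLeast, lowerBounds, mem_ofPred_eq, ← Set.not_infinite,
    ← Nat.frequently_atTop_iff_infinite]
  refine exists_congr fun i => and_congr_right fun _ => and_congr_right fun _ =>
    ⟨fun h j hj => not_lt.1 fun hji => h j hji hj, fun h j hji hj => (h hj).not_gt hji⟩

lemma winsI_iff_even {p : ℕ → V} {m : ℕ} (hm : IsLeast (G.infColors p) m) :
    G.WinsI p ↔ Even m :=
  winsI_iff_isLeast.trans ⟨fun ⟨_, hi, hleast⟩ => hleast.unique hm ▸ hi, fun h => ⟨m, h, hm⟩⟩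

lemma infColors_shift (p : ℕ → V) (m : ℕ) : G.infColors (fun k => p (m + k)) = G.infColors p := by
  ext i
  simp only [infColors, mem_ofPred_eq, add_comm m]
  rw [← frequently_map (m := fun k => k + m) (P := fun n => G.col (p n) = i),
    map_add_atTop_eq_nat]

lemma winsI_shift_iff {p : ℕ → V} (m : ℕ) : G.WinsI (fun k => p (m + k)) ↔ G.WinsI p := by
  simp only [winsI_iff_isLeast, infColors_shift]

lemma winsI_of_frequently_col_zero {p : ℕ → V} (h : ∃ᶠ n in atTop, G.col (p n) = 0) :
    G.WinsI p :=
  winsI_iff_isLeast.2 ⟨0, Even.zero, h, fun _ _ => Nat.zero_le _⟩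

lemma infColors_nonempty {p : ℕ → V} {D : ℕ} (hD : ∀ n, G.col (p n) < D) :
    (G.infColors p).Nonempty := by
  by_contra h
  have hfin : ∀ i ∈ Iio D, ∀ᶠ n in atTop, G.col (p n) ≠ i := fun i _ =>
    not_frequently.1 fun hi => h ⟨i, hi⟩
  obtain ⟨n, hn⟩ := ((finite_Iio D).eventually_all.2 hfin).exists
  exact hn _ (hD n) rfl

variable (G)

def dual : PGame V := ⟨G.VIᶜ, G.E, fun v => G.col v - 1⟩

variable {G}

/-- Lowering colours by one flips their parity, as long as no colour `0` is truncated. -/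
lemma winsI_dual_iff {p : ℕ → V} {D : ℕ} (h0 : ∀ n, G.col (p n) ≠ 0) (hD : ∀ n, G.col (p n) < D) :
    G.dual.WinsI p ↔ ¬G.WinsI p := by
  have hsucc : ∀ i, i ∈ G.dual.infColors p ↔ i + 1 ∈ G.infColors p := fun i => by
    simp only [infColors, dual, mem_ofPred_eq]
    refine frequently_congr (Eventually.of_forall fun n => ?_)
    have := h0 n
    omega
  have hleast := Nat.sInf_mem (infColors_nonempty hD)
  obtain ⟨k, hk⟩ := Nat.exists_eq_add_one_of_ne_zero fun h =>
    (h ▸ hleast : 0 ∈ G.infColors p).exists.elim fun n hn => h0 n hn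
  have hm : IsLeast (G.infColors p) (k + 1) :=
    hk ▸ ⟨hleast, fun j hj => Nat.sInf_le hj⟩
  have hm' : IsLeast (G.dual.infColors p) k :=
    ⟨(hsucc k).2 hm.1, fun j hj => Nat.le_of_succ_le_succ (hm.2 ((hsucc j).1 hj))⟩
  rw [winsI_iff_even hm, winsI_iff_even hm', Nat.even_add_one, not_not]

end Winning

section Subgames

variable (G : PGame V)

def IsPlayIn (U : Set V) (p : ℕ → V) : Prop := G.IsPlay p ∧ ∀ n, p n ∈ U

/-- A player is represented by the set `C` of her vertices, `G.VI` or `G.VIᶜ`. -/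
def IsStrategyOn (C X : Set V) (σ : V → V) : Prop := ∀ v ∈ X, v ∈ C → G.E v (σ v) ∧ σ v ∈ X

def IsTrap (C U X : Set V) : Prop := ∀ v ∈ X, v ∈ C → ∀ w ∈ U, G.E v w → w ∈ X

def WinsFromI (U X : Set V) (σ : V → V) : Prop :=
  ∀ p, G.IsPlayIn U p → p 0 ∈ X → Follows G.VI σ p → G.WinsI p

def WinsFromII (U X : Set V) (τ : V → V) : Prop :=
  ∀ p, G.IsPlayIn U p → p 0 ∈ X → Follows G.VIᶜ τ p → ¬G.WinsI p

variable {G}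

lemma IsPlayIn.shift {U : Set V} {p : ℕ → V} (hp : G.IsPlayIn U p) (m : ℕ) :
    G.IsPlayIn U (fun k => p (m + k)) :=
  ⟨fun k => hp.1 (m + k), fun k => hp.2 (m + k)⟩

lemma IsPlayIn.forall_mem_of_isTrap {C U X : Set V} {σ : V → V} {p : ℕ → V}
    (hp : G.IsPlayIn U p) (hX : G.IsTrap Cᶜ U X) (hσ : G.IsStrategyOn C X σ)
    (hf : Follows (C ∩ X) σ p) (h0 : p 0 ∈ X) : ∀ n, p n ∈ X := by
  intro n
  induction n with
  | zero => exact h0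
  | succ n ih =>
    by_cases hC : p n ∈ C
    · rw [hf n ⟨hC, ih⟩]; exact (hσ _ ih hC).2
    · exact hX _ ih hC _ (hp.2 _) (hp.1 n)

lemma exists_isStrategyOn {C X : Set V} (h : ∀ v ∈ X, v ∈ C → ∃ w ∈ X, G.E v w) :
    ∃ σ, G.IsStrategyOn C X σ := by
  have : ∀ v, ∃ w, v ∈ X → v ∈ C → G.E v w ∧ w ∈ X := fun v => by
    by_cases hv : v ∈ X ∧ v ∈ C
    · obtain ⟨w, hw, hE⟩ := h v hv.1 hv.2
      exact ⟨w, fun _ _ => ⟨hE, hw⟩⟩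
    · exact ⟨v, fun h₁ h₂ => absurd ⟨h₁, h₂⟩ hv⟩
  choose σ hσ using this
  exact ⟨σ, hσ⟩

lemma isStrategyOn_piecewise {C U X : Set V} [DecidablePred (· ∈ X)] {σ χ : V → V}
    (hσ : ∀ v ∈ X, v ∈ C → G.E v (σ v) ∧ σ v ∈ U) (hχ : G.IsStrategyOn C U χ) :
    G.IsStrategyOn C U (X.piecewise σ χ) := fun v hv hC => by
  by_cases hX : v ∈ X
  · rw [piecewise_eq_of_mem _ _ _ hX]; exact hσ v hX hC
  · rw [piecewise_eq_of_notMem _ _ _ hX]; exact hχ v hv hC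

lemma winsFromII_of_dual {U X : Set V} {σ : V → V} {D : ℕ} (h0 : ∀ v ∈ U, G.col v ≠ 0)
    (hD : ∀ v ∈ U, G.col v < D) (h : G.dual.WinsFromI U X σ) : G.WinsFromII U X σ :=
  fun p hp hp0 hf =>
    (winsI_dual_iff (fun n => h0 _ (hp.2 n)) fun n => hD _ (hp.2 n)).1 (h p hp hp0 hf)

lemma winsFromI_of_dual {U X : Set V} {τ : V → V} {D : ℕ} (h0 : ∀ v ∈ U, G.col v ≠ 0)
    (hD : ∀ v ∈ U, G.col v < D) (h : G.dual.WinsFromII U X τ) : G.WinsFromI U X τ :=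
  fun p hp hp0 hf => not_not.1 <|
    (winsI_dual_iff (fun n => h0 _ (hp.2 n)) fun n => hD _ (hp.2 n)).not.1
      (h p hp hp0 (hf.mono (compl_compl G.VI).subset))

end Subgames

section Attractor

open OrdinalApprox

variable (G : PGame V) (C Z T : Set V)

def attrStep : Set V →o Set V where
  toFun X := T ∪ {v | v ∈ Z ∧ v ∈ C ∧ ∃ w ∈ X, G.E v w}
    ∪ {v | v ∈ Z ∧ v ∉ C ∧ ∀ w ∈ Z, G.E v w → w ∈ X}
  monotone' _ _ hXY := union_subset_union
    (union_subset_union_right _ fun _ ⟨hZ, hC, w, hw, hE⟩ => ⟨hZ, hC, w, hXY hw, hE⟩)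
    fun _ ⟨hZ, hC, h⟩ => ⟨hZ, hC, fun w hw hE => hXY (h w hw hE)⟩

/-- The attractor: the vertices from which the owner of `C` can force a visit to `T`
while the play stays in `Z`. -/
def attr : Set V := (G.attrStep C Z T).lfp

noncomputable def attrRank (v : V) : Ordinal.{u} :=
  sInf {o | v ∈ lfpApprox (G.attrStep C Z T) ⊥ o}

lemma attrStep_attr : G.attrStep C Z T (G.attr C Z T) = G.attr C Z T := OrderHom.map_lfp _

lemma subset_attr : T ⊆ G.attr C Z T := fun v hv => by
  rw [← attrStep_attr]; exact Or.inl (Or.inl hv)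

lemma attr_subset (hT : T ⊆ Z) : G.attr C Z T ⊆ Z := fun v hv => by
  rw [← attrStep_attr] at hv
  rcases hv with (h | h) | h
  exacts [hT h, h.1, h.1]

lemma isTrap_diff_attr : G.IsTrap C Z (Z \ G.attr C Z T) :=
  fun v hv hC w hw hE => ⟨hw, fun hwA => hv.2 <| by
    rw [← attrStep_attr]; exact Or.inl (Or.inr ⟨hv.1, hC, w, hwA, hE⟩)⟩

lemma exists_edge_diff_attr {v : V} (hv : v ∈ Z \ G.attr C Z T) (hC : v ∉ C) :
    ∃ w ∈ Z \ G.attr C Z T, G.E v w := by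
  by_contra! h
  refine hv.2 ?_
  rw [← attrStep_attr]
  exact Or.inr ⟨hv.1, hC, fun w hw hE => by_contra fun hwA => h w ⟨hw, hwA⟩ hE⟩

lemma exists_mem_diff_attr (hC : ∀ v ∈ Z, v ∈ C → ∃ w ∈ Z, G.E v w) :
    ∀ v ∈ Z \ G.attr C Z T, ∃ w ∈ Z \ G.attr C Z T, G.E v w := fun v hv => by
  by_cases hvC : v ∈ C
  · obtain ⟨w, hw, hE⟩ := hC v hv.1 hvC
    exact ⟨w, G.isTrap_diff_attr C Z T v hv hvC w hw hE, hE⟩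
  · exact G.exists_edge_diff_attr C Z T hv hvC

variable {G C Z T}

lemma exists_attrStep_attrRank_lt {v : V} (hv : v ∈ G.attr C Z T) :
    ∃ X ⊆ G.attr C Z T, (∀ w ∈ X, G.attrRank C Z T w < G.attrRank C Z T v) ∧
      v ∈ G.attrStep C Z T X := by
  set f := G.attrStep C Z T
  have hne : {o | v ∈ lfpApprox f ⊥ o}.Nonempty := by
    obtain ⟨o, ho⟩ := lfp_mem_range_lfpApprox f
    exact ⟨o, by rw [mem_ofPred_eq, ho]; exact hv⟩
  have hmem := csInf_mem hne
  rw [mem_ofPred_eq, lfpApprox] at hmem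
  simp only [bot_eq_empty, sup_eq_union, iSup_eq_iUnion, empty_union, mem_iUnion,
    exists_prop] at hmem
  obtain ⟨b, hb, hvb⟩ := hmem
  exact ⟨lfpApprox f ⊥ b, lfpApprox_le_of_mem_fixedPoints _ f.isFixedPt_lfp bot_le b,
    fun w hw => (csInf_le' (show b ∈ {o | w ∈ lfpApprox f ⊥ o} from hw)).trans_lt hb, hvb⟩

lemma exists_edge_attrRank_lt {v : V} (hv : v ∈ G.attr C Z T \ T) (hC : v ∈ C) :
    ∃ w, G.E v w ∧ w ∈ G.attr C Z T ∧ G.attrRank C Z T w < G.attrRank C Z T v := by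
  obtain ⟨X, hX, hlt, hstep⟩ := exists_attrStep_attrRank_lt hv.1
  rcases hstep with (h | ⟨-, -, w, hw, hE⟩) | ⟨-, h, -⟩
  exacts [absurd h hv.2, ⟨w, hE, hX hw, hlt w hw⟩, absurd hC h]

lemma attrRank_lt_of_edge {v w : V} (hv : v ∈ G.attr C Z T \ T) (hC : v ∉ C) (hw : w ∈ Z)
    (hE : G.E v w) : w ∈ G.attr C Z T ∧ G.attrRank C Z T w < G.attrRank C Z T v := by
  obtain ⟨X, hX, hlt, hstep⟩ := exists_attrStep_attrRank_lt hv.1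
  rcases hstep with (h | ⟨-, h, -⟩) | ⟨-, -, h⟩
  exacts [absurd h hv.2, absurd h hC, ⟨hX (h w hw hE), hlt w (h w hw hE)⟩]

/-- Otherwise the ranks along the play would form a decreasing sequence of ordinals. -/
lemma exists_mem_of_attrRank_lt {σ : V → V}
    (hσ : ∀ v ∈ G.attr C Z T \ T, v ∈ C →
      σ v ∈ G.attr C Z T ∧ G.attrRank C Z T (σ v) < G.attrRank C Z T v)
    {p : ℕ → V} (hp : G.IsPlayIn Z p) (hf : Follows (C ∩ (G.attr C Z T \ T)) σ p)
    (h0 : p 0 ∈ G.attr C Z T) : ∃ n, p n ∈ T := by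
  by_contra! hT
  have hstep : ∀ n, p n ∈ G.attr C Z T →
      p (n + 1) ∈ G.attr C Z T ∧ G.attrRank C Z T (p (n + 1)) < G.attrRank C Z T (p n) := by
    intro n hn
    by_cases hC : p n ∈ C
    · rw [hf n ⟨hC, hn, hT n⟩]; exact hσ _ ⟨hn, hT n⟩ hC
    · exact attrRank_lt_of_edge ⟨hn, hT n⟩ hC (hp.2 _) (hp.1 n)
  have hmem : ∀ n, p n ∈ G.attr C Z T := fun n => Nat.rec h0 (fun n ih => (hstep n ih).1) n
  exact not_strictAnti_of_wellFoundedLT (fun n => G.attrRank C Z T (p n))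
    (strictAnti_nat_of_succ_lt fun n => (hstep n (hmem n)).2)

lemma mem_attr_of_edge {v w : V} (hv : v ∈ G.attr C Z T \ T) (hC : v ∉ C) (hw : w ∈ Z)
    (hE : G.E v w) : w ∈ G.attr C Z T :=
  (attrRank_lt_of_edge hv hC hw hE).1

variable (G C Z T)

theorem exists_attractor_strategy : ∃ σ : V → V,
    (∀ v ∈ G.attr C Z T \ T, v ∈ C → G.E v (σ v) ∧ σ v ∈ G.attr C Z T) ∧
    ∀ p, G.IsPlayIn Z p → Follows (C ∩ (G.attr C Z T \ T)) σ p →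
      (∃ᶠ n in atTop, p n ∈ G.attr C Z T) → ∃ᶠ n in atTop, p n ∈ T := by
  have : ∀ v, ∃ w, v ∈ G.attr C Z T \ T → v ∈ C →
      G.E v w ∧ w ∈ G.attr C Z T ∧ G.attrRank C Z T w < G.attrRank C Z T v := fun v => by
    by_cases hv : v ∈ G.attr C Z T \ T ∧ v ∈ C
    · obtain ⟨w, hw⟩ := exists_edge_attrRank_lt hv.1 hv.2
      exact ⟨w, fun _ _ => hw⟩
    · exact ⟨v, fun h₁ h₂ => absurd ⟨h₁, h₂⟩ hv⟩
  choose σ hσ using this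
  refine ⟨σ, fun v hv hC => (hσ v hv hC).imp_right And.left, fun p hp hf hA => ?_⟩
  rw [frequently_atTop] at hA ⊢
  intro N
  obtain ⟨n, hn, hnA⟩ := hA N
  obtain ⟨k, hk⟩ := exists_mem_of_attrRank_lt (fun v hv hC => (hσ v hv hC).2) (hp.shift n)
    (hf.shift n) hnA
  exact ⟨n + k, le_add_right hn, hk⟩

end Attractor

section Paradise

variable (G : PGame V)

structure IsParadise (U P : Set V) (τ : V → V) : Prop where
  subset : P ⊆ U
  trap : G.IsTrap G.VI U P
  strategy : G.IsStrategyOn G.VIᶜ P τ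
  wins : G.WinsFromII U P τ

variable {G} {U P : Set V} {τ : V → V}

lemma IsParadise.forall_mem (hP : G.IsParadise U P τ) {p : ℕ → V} (hp : G.IsPlayIn U p)
    (hf : Follows (G.VIᶜ ∩ P) τ p) (h0 : p 0 ∈ P) : ∀ n, p n ∈ P :=
  hp.forall_mem_of_isTrap ((compl_compl G.VI).symm ▸ hP.trap) hP.strategy hf h0

lemma IsParadise.not_winsI (hP : G.IsParadise U P τ) {p : ℕ → V} (hp : G.IsPlayIn U p)
    (hf : Follows (G.VIᶜ ∩ P) τ p) (h0 : p 0 ∈ P) : ¬G.WinsI p :=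
  hP.wins p hp h0 fun n hn => hf n ⟨hn, hP.forall_mem hp hf h0 n⟩

/-- A play that enters `P` is lost by player I from then on; one that never does is lost
inside `X`. -/
lemma IsParadise.union (hP : G.IsParadise U P τ) {X : Set V} {τ' : V → V} (hXU : X ⊆ U)
    (htrap : G.IsTrap G.VI U (P ∪ X))
    (hτ' : ∀ v ∈ X, v ∉ G.VI → G.E v (τ' v) ∧ τ' v ∈ P ∪ X) (hwin : G.WinsFromII X X τ') :
    ∃ τ'', G.IsParadise U (P ∪ X) τ'' := by
  classical
  have hstrat : G.IsStrategyOn G.VIᶜ (P ∪ X) (P.piecewise τ τ') := by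
    intro v hv hvI
    by_cases hvP : v ∈ P
    · rw [piecewise_eq_of_mem _ _ _ hvP]; exact (hP.strategy v hvP hvI).imp_right Or.inl
    · rw [piecewise_eq_of_notMem _ _ _ hvP]; exact hτ' v (hv.resolve_left hvP) hvI
  refine ⟨_, union_subset hP.subset hXU, htrap, hstrat, fun p hp h0 hf => ?_⟩
  have hmem := hp.forall_mem_of_isTrap ((compl_compl G.VI).symm ▸ htrap) hstrat
    (hf.mono inter_subset_left) h0
  by_cases hPp : ∃ n, p n ∈ P
  · obtain ⟨n, hn⟩ := hPp
    rw [← winsI_shift_iff n]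
    exact hP.not_winsI (hp.shift n)
      (fun k hk => (hf _ hk.1).trans (piecewise_eq_of_mem _ _ _ hk.2)) hn
  · simp only [not_exists] at hPp
    have hX : ∀ n, p n ∈ X := fun n => (hmem n).resolve_left (hPp n)
    exact hwin p ⟨hp.1, hX⟩ (hX 0) fun n hn => by rw [hf n hn, piecewise_eq_of_notMem _ _ _ (hPp n)]

/-- Each vertex moves into the least paradise containing it; the indices of these paradises
decrease along a play, hence are eventually constant. -/
theorem isParadise_iUnion {ι : Type*} [LinearOrder ι] [WellFoundedLT ι] {P : ι → Set V}
    {τ : ι → V → V} (h : ∀ i, G.IsParadise U (P i) (τ i)) :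
    ∃ τ', G.IsParadise U (⋃ i, P i) τ' := by
  classical
  have hleast : ∀ v ∈ ⋃ i, P i, ∃ i, v ∈ P i ∧ ∀ j, v ∈ P j → i ≤ j := fun v hv =>
    let ⟨i, hi, hmin⟩ := wellFounded_lt.has_min {i | v ∈ P i} (mem_iUnion.1 hv)
    ⟨i, hi, fun j hj => not_lt.1 (hmin j hj)⟩
  choose idx hidx hle using hleast
  let τ' v := if hv : v ∈ ⋃ i, P i then τ (idx v hv) v else v
  have hτ' : ∀ v (hv : v ∈ ⋃ i, P i), τ' v = τ (idx v hv) v := fun v hv => dif_pos hv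
  have hnext : ∀ v (hv : v ∈ ⋃ i, P i), ∀ w ∈ U, G.E v w → (v ∉ G.VI → w = τ' v) →
      w ∈ P (idx v hv) := fun v hv w hw hE hτ => by
    by_cases hvI : v ∈ G.VI
    · exact (h _).trap v (hidx v hv) hvI w hw hE
    · rw [hτ hvI, hτ' v hv]; exact ((h _).strategy v (hidx v hv) hvI).2
  have htrap : G.IsTrap G.VI U (⋃ i, P i) := fun v hv hvI w hw hE =>
    mem_iUnion_of_mem _ (hnext v hv w hw hE fun h => absurd hvI h)
  have hstrat : G.IsStrategyOn G.VIᶜ (⋃ i, P i) τ' := fun v hv hvI => by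
    rw [hτ' v hv]
    exact ((h _).strategy v (hidx v hv) hvI).imp_right (mem_iUnion_of_mem _)
  refine ⟨τ', iUnion_subset fun i => (h i).subset, htrap, hstrat, fun p hp h0 hf => ?_⟩
  have hmem := hp.forall_mem_of_isTrap ((compl_compl G.VI).symm ▸ htrap) hstrat
    (hf.mono inter_subset_left) h0
  let i : ℕ → ι := fun n => idx (p n) (hmem n)
  have hi : Antitone i := antitone_nat_of_succ_le fun n =>
    hle _ _ _ (hnext _ _ _ (hp.2 (n + 1)) (hp.1 n) (hf n))
  obtain ⟨m, hm⟩ := WellFoundedGT.monotone_chain_condition (α := ιᵒᵈ) ⟨i, hi⟩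
  rw [← winsI_shift_iff m]
  refine (h (i m)).not_winsI (hp.shift m) (fun k hk => ?_) (hidx _ _)
  refine (hf _ hk.1).trans ((hτ' _ (hmem _)).trans ?_)
  exact congrArg (τ · (p (m + k))) (hm (m + k) (le_add_right le_rfl)).symm

variable (G U) in
theorem exists_maximal_paradise :
    ∃ P τ, G.IsParadise U P τ ∧ ∀ P' τ', G.IsParadise U P' τ' → P' ⊆ P := by
  let ι := {q : Set V × (V → V) // G.IsParadise U q.1 q.2}
  obtain ⟨_, _⟩ := exists_wellFoundedLT ι
  obtain ⟨τ, hτ⟩ := isParadise_iUnion (P := fun i : ι => i.1.1) (τ := fun i => i.1.2) fun i => i.2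
  exact ⟨_, τ, hτ, fun P' τ' h => subset_iUnion (fun i : ι => i.1.1) ⟨(P', τ'), h⟩⟩

lemma IsParadise.exists_isParadise_attr (hP : G.IsParadise U P τ) :
    ∃ τ', G.IsParadise U (G.attr G.VIᶜ U P) τ' := by
  obtain ⟨σ, hσ, hreach⟩ := G.exists_attractor_strategy G.VIᶜ U P
  have hA : P ∪ (G.attr G.VIᶜ U P \ P) = G.attr G.VIᶜ U P :=
    union_sdiff_cancel (G.subset_attr _ _ _)
  rw [← hA]
  refine hP.union (sdiff_subset.trans (G.attr_subset _ _ _ hP.subset)) ?_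
    (fun v hv hvI => hA ▸ hσ v hv hvI) fun p hp h0 hf => ?_
  · rw [hA]
    intro v hv hvI w hw hE
    by_cases hvP : v ∈ P
    · exact G.subset_attr _ _ _ (hP.trap v hvP hvI w hw hE)
    · exact mem_attr_of_edge ⟨hv, hvP⟩ (not_not_intro hvI) hw hE
  · obtain ⟨n, hn⟩ := (hreach p ⟨hp.1, fun n => G.attr_subset _ _ _ hP.subset (hp.2 n).1⟩
      (hf.mono inter_subset_left) (Frequently.of_forall fun n => (hp.2 n).1)).exists
    exact absurd hn (hp.2 n).2

lemma IsParadise.diff_of_maximal (hP : G.IsParadise U P τ)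
    (hmax : ∀ P' τ', G.IsParadise U P' τ' → P' ⊆ P) :
    G.IsTrap G.VIᶜ U (U \ P) ∧ ∀ v ∈ U \ P, v ∈ G.VI → ∃ w ∈ U \ P, G.E v w := by
  obtain ⟨τ', h⟩ := hP.exists_isParadise_attr
  have hA : G.attr G.VIᶜ U P = P := (hmax _ _ h).antisymm (G.subset_attr _ _ _)
  rw [← hA]
  exact ⟨G.isTrap_diff_attr _ _ _,
    fun v hv hvI => G.exists_edge_diff_attr _ _ _ hv (not_not_intro hvI)⟩

end Paradise

section Solution

variable (G : PGame V)

/-- Positional determinacy of the subgame on `U`, with `W` the winning region of player I. -/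
structure IsSolution (U W : Set V) (σ τ : V → V) : Prop where
  subset : W ⊆ U
  strategyI : G.IsStrategyOn G.VI U σ
  stays : G.IsStrategyOn G.VI W σ
  trap : G.IsTrap G.VIᶜ U W
  winsI : G.WinsFromI U W σ
  strategyII : G.IsStrategyOn G.VIᶜ U τ
  winsII : G.WinsFromII U (U \ W) τ

variable {G} {U P : Set V} {τ : V → V}

/-- The winning region of player II in the dual game on `S` would enlarge the maximal paradise. -/
lemma IsParadise.eq_empty_of_isSolution_dual (hP : G.IsParadise U P τ)
    (hmax : ∀ P' τ', G.IsParadise U P' τ' → P' ⊆ P) {S W : Set V} {σ' τ' : V → V} {D : ℕ}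
    (hS : S ⊆ U \ P) (hStrap : G.IsTrap G.VI (U \ P) S) (h0 : ∀ v ∈ S, G.col v ≠ 0)
    (hD : ∀ v ∈ S, G.col v < D) (hsol : G.dual.IsSolution S W σ' τ') : W = ∅ := by
  have htrap : G.IsTrap G.VI U (P ∪ W) := by
    rintro v (hv | hv) hvI w hw hE
    · exact Or.inl (hP.trap v hv hvI w hw hE)
    · by_cases hwP : w ∈ P
      · exact Or.inl hwP
      · exact Or.inr (hsol.trap v hv (not_not_intro hvI) w
          (hStrap v (hsol.subset hv) hvI w ⟨hw, hwP⟩ hE) hE)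
  have hwin : G.WinsFromII W W σ' := fun p hp hp0 hf =>
    winsFromII_of_dual h0 hD hsol.winsI p ⟨hp.1, fun n => hsol.subset (hp.2 n)⟩ hp0 hf
  obtain ⟨_, hPW⟩ := hP.union (fun v hv => (hS (hsol.subset hv)).1) htrap
    (fun v hv hvI => (hsol.stays v hv hvI).imp_right Or.inr) hwin
  exact eq_empty_of_forall_notMem fun v hv => (hS (hsol.subset hv)).2 (hmax _ _ hPW (Or.inr hv))

/-- Visiting the attractor of the colour-`0` vertices infinitely often means visiting colour `0`
infinitely often; otherwise the play ends up in the subgame won by `τ`. -/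
theorem exists_winsFromI_of_diff_attr {Z T : Set V} (hZ : G.IsTrap G.VIᶜ U Z)
    (hZI : ∀ v ∈ Z, v ∈ G.VI → ∃ w ∈ Z, G.E v w) (hTZ : T ⊆ Z) (hT : ∀ v ∈ T, G.col v = 0)
    (hτ : G.IsStrategyOn G.VI (Z \ G.attr G.VI Z T) τ)
    (hwin : G.WinsFromI (Z \ G.attr G.VI Z T) (Z \ G.attr G.VI Z T) τ) :
    ∃ σ, G.IsStrategyOn G.VI Z σ ∧ G.WinsFromI U Z σ := by
  classical
  set A := G.attr G.VI Z T
  obtain ⟨σA, hσA, hreach⟩ := G.exists_attractor_strategy G.VI Z T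
  obtain ⟨χ, hχ⟩ := exists_isStrategyOn hZI
  have hAZ : A ⊆ Z := G.attr_subset _ _ _ hTZ
  have hσ : G.IsStrategyOn G.VI Z ((Z \ A).piecewise τ ((A \ T).piecewise σA χ)) :=
    isStrategyOn_piecewise (fun v hv hvI => (hτ v hv hvI).imp_right And.left)
      (isStrategyOn_piecewise (fun v hv hvI => (hσA v hv hvI).imp_right (hAZ ·)) hχ)
  refine ⟨_, hσ, fun p hp h0 hf => ?_⟩
  have hmem : ∀ n, p n ∈ Z := hp.forall_mem_of_isTrap hZ hσ (hf.mono inter_subset_left) h0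
  by_cases hA : ∃ᶠ n in atTop, p n ∈ A
  · refine winsI_of_frequently_col_zero
      ((hreach p ⟨hp.1, hmem⟩ (fun n hn => ?_) hA).mono fun n hn => hT _ hn)
    rw [hf n hn.1, piecewise_eq_of_notMem _ _ _ fun h => h.2 hn.2.1,
      piecewise_eq_of_mem _ _ _ hn.2]
  · obtain ⟨N, hN⟩ := eventually_atTop.1 (not_frequently.1 hA)
    have hS : ∀ k, p (N + k) ∈ Z \ A := fun k => ⟨hmem _, hN _ (Nat.le_add_right _ _)⟩
    rw [← winsI_shift_iff N]
    exact hwin _ ⟨(hp.shift N).1, hS⟩ (hS 0) fun k hk =>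
      (hf _ hk).trans (piecewise_eq_of_mem _ _ _ (hS k))

lemma IsParadise.exists_isSolution_diff (hP : G.IsParadise U P τ)
    (htot : ∀ v ∈ U, ∃ w ∈ U, G.E v w) (htrap : G.IsTrap G.VIᶜ U (U \ P)) {σ : V → V}
    (hσ : G.IsStrategyOn G.VI (U \ P) σ) (hwin : G.WinsFromI U (U \ P) σ) :
    ∃ σ' τ', G.IsSolution U (U \ P) σ' τ' := by
  classical
  obtain ⟨χ, hχ⟩ := exists_isStrategyOn (C := G.VI) fun v hv _ => htot v hv
  obtain ⟨χ', hχ'⟩ := exists_isStrategyOn (C := G.VIᶜ) fun v hv _ => htot v hv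
  have hσ' : G.IsStrategyOn G.VI (U \ P) ((U \ P).piecewise σ χ) := fun v hv hvI => by
    rw [piecewise_eq_of_mem _ _ _ hv]; exact hσ v hv hvI
  refine ⟨_, P.piecewise τ χ', ⟨sdiff_subset,
    isStrategyOn_piecewise (fun v hv hvI => (hσ v hv hvI).imp_right And.left) hχ, hσ', htrap,
    fun p hp h0 hf => ?_,
    isStrategyOn_piecewise (fun v hv hvI => (hP.strategy v hv hvI).imp_right (hP.subset ·)) hχ',
    fun p hp h0 hf => ?_⟩⟩
  · have hmem := hp.forall_mem_of_isTrap htrap hσ' (hf.mono inter_subset_left) h0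
    exact hwin p hp h0 fun n hn => (hf n hn).trans (piecewise_eq_of_mem _ _ _ (hmem n))
  · rw [sdiff_sdiff_cancel_left hP.subset] at h0
    exact hP.not_winsI hp (fun n hn => (hf n hn.1).trans (piecewise_eq_of_mem _ _ _ hn.2)) h0

theorem exists_isSolution (d : ℕ) : ∀ (G : PGame V) (U : Set V),
    (∀ v ∈ U, ∃ w ∈ U, G.E v w) → (∀ v ∈ U, G.col v < d) → ∃ W σ τ, G.IsSolution U W σ τ := by
  induction d with
  | zero =>
    intro G U _ hcol
    have hU : ∀ v ∈ U, False := fun v hv => Nat.not_lt_zero _ (hcol v hv)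
    exact ⟨∅, id, id, empty_subset U, fun v hv => (hU v hv).elim, fun _ hv => hv.elim,
      fun _ hv => hv.elim, fun _ _ h0 => h0.elim, fun v hv => (hU v hv).elim,
      fun _ _ h0 => (hU _ h0.1).elim⟩
  | succ d ih =>
    intro G U htot hcol
    obtain ⟨P, τ, hP, hmax⟩ := G.exists_maximal_paradise U
    obtain ⟨hZ, hZI⟩ := hP.diff_of_maximal hmax
    set Z := U \ P
    set T := {v | v ∈ Z ∧ G.col v = 0}
    set S := Z \ G.attr G.VI Z T
    have hS0 : ∀ v ∈ S, G.col v ≠ 0 := fun v hv h0 => hv.2 (G.subset_attr _ _ _ ⟨hv.1, h0⟩)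
    have hSD : ∀ v ∈ S, G.col v < d + 1 := fun v hv => hcol v hv.1.1
    obtain ⟨W, σ', τ', hsol⟩ := ih G.dual S (G.exists_mem_diff_attr _ _ _ hZI) fun v hv => by
      have := hS0 v hv
      have := hSD v hv
      change G.col v - 1 < d
      omega
    have hW : W = ∅ := hP.eq_empty_of_isSolution_dual hmax sdiff_subset
      (G.isTrap_diff_attr _ _ _) hS0 hSD hsol
    have hwinII := hsol.winsII
    rw [hW, sdiff_empty] at hwinII
    obtain ⟨σ, hσ, hwin⟩ := exists_winsFromI_of_diff_attr hZ hZI (fun v hv => hv.1)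
      (fun v hv => hv.2) (fun v hv hvI => hsol.strategyII v hv (not_not_intro hvI))
      (winsFromI_of_dual hS0 hSD hwinII)
    exact ⟨_, hP.exists_isSolution_diff htot hZ hσ hwin⟩

end Solution

end PGame

/-- Positional determinacy of parity games: the winning regions partition the vertices,
and each player has a uniform memoryless winning strategy. -/
theorem parity_positional_determinacy {V : Type*} (d : ℕ) (G : PGame V)
    (htot : ∀ v, ∃ w, G.E v w) (hcol : ∀ v, G.col v < d) :
    (∀ v, (G.WinRegI v ∨ G.WinRegII v) ∧ ¬(G.WinRegI v ∧ G.WinRegII v)) ∧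
    (∃ s : V → V, (∀ v ∈ G.VI, G.E v (s v)) ∧
      ∀ v, G.WinRegI v → ∀ p : ℕ → V, p 0 = v → G.IsPlay p →
        (∀ n, p n ∈ G.VI → p (n + 1) = s (p n)) → G.WinsI p) ∧
    (∃ s : V → V, (∀ v ∉ G.VI, G.E v (s v)) ∧
      ∀ v, G.WinRegII v → ∀ p : ℕ → V, p 0 = v → G.IsPlay p →
        (∀ n, p n ∉ G.VI → p (n + 1) = s (p n)) → ¬ G.WinsI p) := by
  obtain ⟨W, σ, τ, h⟩ := PGame.exists_isSolution d G univ
    (fun v _ => (htot v).imp fun w hw => ⟨trivial, hw⟩) fun v _ => hcol v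
  have hσ : ∀ v ∈ G.VI, G.E v (σ v) := fun v hv => (h.strategyI v trivial hv).1
  have hτ : ∀ v ∉ G.VI, G.E v (τ v) := fun v hv => (h.strategyII v trivial hv).1
  have hI : ∀ v ∈ W, G.WinRegI v := fun v hv => G.winRegI_of_positional hσ
    fun p hp0 hp hf => h.winsI p ⟨hp, fun _ => trivial⟩ (hp0 ▸ hv) hf
  have hII : ∀ v ∉ W, G.WinRegII v := fun v hv => G.winRegII_of_positional hτ
    fun p hp0 hp hf => h.winsII p ⟨hp, fun _ => trivial⟩ (hp0 ▸ ⟨trivial, hv⟩) hf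
  have hW : ∀ v, G.WinRegI v → v ∈ W := fun v hv =>
    by_contra fun hvW => G.not_winRegI_and_winRegII v ⟨hv, hII v hvW⟩
  refine ⟨fun v => ⟨(em (v ∈ W)).imp (hI v) (hII v), G.not_winRegI_and_winRegII v⟩,
    ⟨σ, hσ, fun v hv p hp0 hp hf => h.winsI p ⟨hp, fun _ => trivial⟩ (hp0 ▸ hW v hv) hf⟩,
    ⟨τ, hτ, fun v hv p hp0 hp hf => h.winsII p ⟨hp, fun _ => trivial⟩
      (hp0 ▸ ⟨trivial, fun hvW => G.not_winRegI_and_winRegII v ⟨hI v hvW, hv⟩⟩) hf⟩⟩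
end

section
/- Let V be a type, f : V → V a function, x₀ : V, and c : V → Fin k a coloring. Consider the orbit x_n = f^n(x₀). Let Reach(y) denote the forward orbit {f^n(y) : n ∈ ℕ} of y. Then for any i < k, the following are equivalent: (a) i is the least color such that c(x_n) = i for infinitely many n; (b) for every j < i there exists y in the orbit of x₀ such that no element of Reach(y) has color j, and for every y in the orbit of x₀ some element of Reach(y) has color i. -/
namespace Nat

theorem infinite_setOf_iff_forall_exists_add {p : ℕ → Prop} :
    {n | p n}.Infinite ↔ ∀ m, ∃ n, p (n + m) := by
  rw [← Nat.frequently_atTop_iff_infinite, Filter.frequently_atTop]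
  refine forall_congr' fun m =>
    ⟨fun ⟨n, hmn, hn⟩ => ⟨n - m, ?_⟩, fun ⟨n, hn⟩ => ⟨n + m, by omega, hn⟩⟩
  rwa [Nat.sub_add_cancel hmn]

theorem finite_setOf_iff_exists_forall_add {p : ℕ → Prop} :
    {n | p n}.Finite ↔ ∃ m, ∀ n, ¬p (n + m) := by
  rw [← Set.not_infinite, infinite_setOf_iff_forall_exists_add]
  simp only [not_forall, not_exists]

end Nat

theorem least_recurring_color_iff_reachability_general {V : Type*} (f : V → V) (x₀ : V)
    (c : V → ℕ) (i : ℕ) :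
    ({n | c (f^[n] x₀) = i}.Infinite ∧ ∀ j < i, {n | c (f^[n] x₀) = j}.Finite) ↔
      ((∀ j < i, ∃ m : ℕ, ∀ n : ℕ, c (f^[n] (f^[m] x₀)) ≠ j) ∧
        ∀ m : ℕ, ∃ n : ℕ, c (f^[n] (f^[m] x₀)) = i) := by
  simp only [Nat.infinite_setOf_iff_forall_exists_add, Nat.finite_setOf_iff_exists_forall_add,
    Function.iterate_add_apply, ne_eq]
  exact and_comm

/-- Along the orbit `x_n = f^[n] x₀` with colors `c` bounded by `k`, for `i < k` the
following are equivalent: (a) `i` is the least color occurring infinitely often;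
(b) for every `j < i` some point `y` of the orbit has no point of color `j` in its
forward orbit, and from every point of the orbit some point of color `i` is reachable. -/
theorem least_recurring_color_iff_reachability {V : Type*} (k : ℕ) (f : V → V) (x₀ : V)
    (c : V → ℕ) (hc : ∀ v, c v < k) (i : ℕ) (hi : i < k) :
    ({n | c (f^[n] x₀) = i}.Infinite ∧ ∀ j < i, {n | c (f^[n] x₀) = j}.Finite) ↔
      ((∀ j < i, ∃ m : ℕ, ∀ n : ℕ, c (f^[n] (f^[m] x₀)) ≠ j) ∧
        ∀ m : ℕ, ∃ n : ℕ, c (f^[n] (f^[m] x₀)) = i) :=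
  least_recurring_color_iff_reachability_general f x₀ c i
end

section
/- Let 𝒢 be an edge labelled parity game over alphabets Σin, Σout with node sets V_in, V_out, initial node v₀ ∈ V_in, transition function δ : (V_in × Σin) ∪ (V_out × Σout) → V, and parity colors on nodes; let R_𝒢 ⊆ Σin^ω × Σout^ω be the set of pairs (x, y) whose induced play is winning for player output. Then there exists a causal operator f : Σin^ω → Σout^ω implementing R_𝒢 (i.e., (x, f(x)) ∈ R_𝒢 for all x) if and only if player output has a winning strategy from v₀ in the underlying (non edge labelled) parity game obtained by forgetting edge labels. -/
section GCP

variable {Vin Vout A B : Type*}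

/-- The input-nodes of the play induced by the pair of words `(x, y)`:
`v 0 = v₀`, `w n = δi (v n) (x n)`, `v (n+1) = δo (w n) (y n)`. -/
def pairPlay (δi : Vin → A → Vout) (δo : Vout → B → Vin) (v₀ : Vin)
    (x : ℕ → A) (y : ℕ → B) : ℕ → Vin
  | 0 => v₀
  | n + 1 => δo (δi (pairPlay δi δo v₀ x y n) (x n)) (y n)

/-- The interleaved color sequence of the play induced by `(x, y)`. -/
def pairColors (δi : Vin → A → Vout) (δo : Vout → B → Vin)
    (ci : Vin → ℕ) (co : Vout → ℕ) (v₀ : Vin) (x : ℕ → A) (y : ℕ → B) (n : ℕ) : ℕ :=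
  if n % 2 = 0 then ci (pairPlay δi δo v₀ x y (n / 2))
  else co (δi (pairPlay δi δo v₀ x y (n / 2)) (x (n / 2)))

/-- A color sequence is winning for player output iff the least color occurring
infinitely often is even. -/
def OutWinsSeq (q : ℕ → ℕ) : Prop :=
  ∃ i, Even i ∧ {n | q n = i}.Infinite ∧ ∀ j < i, {n | q n = j}.Finite

/-- `(x, y) ∈ R_𝒢`: the induced play is winning for player output. -/
def PairWinning (δi : Vin → A → Vout) (δo : Vout → B → Vin)
    (ci : Vin → ℕ) (co : Vout → ℕ) (v₀ : Vin) (x : ℕ → A) (y : ℕ → B) : Prop :=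
  OutWinsSeq (pairColors δi δo ci co v₀ x y)

/-- An operator is causal if its `n`-th output letter depends only on the first `n+1`
input letters. -/
def Causal (f : (ℕ → A) → ℕ → B) : Prop :=
  ∀ x x' n, (∀ k ≤ n, x k = x' k) → f x n = f x' n

/-- The edge relation of the underlying (non edge labelled) parity game. -/
def UEdge (δi : Vin → A → Vout) (δo : Vout → B → Vin) :
    (Vin ⊕ Vout) → (Vin ⊕ Vout) → Prop
  | Sum.inl v, Sum.inr w => ∃ σ : A, δi v σ = w
  | Sum.inr w, Sum.inl v => ∃ τ : B, δo w τ = v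
  | _, _ => False

def hist (p : ℕ → Vin ⊕ Vout) (n : ℕ) : List (Vin ⊕ Vout) :=
  List.ofFn fun i : Fin (n + 1) => p i

/-- A (general) strategy for player output produces legal moves at output nodes. -/
def LegalOut (δi : Vin → A → Vout) (δo : Vout → B → Vin)
    (s : List (Vin ⊕ Vout) → Vin ⊕ Vout) : Prop :=
  ∀ h p, h.getLast? = some p → p.isRight = true → UEdge δi δo p (s h)

/-- A play from `v` of the underlying game consistent with output's strategy `s`. -/
def ConsOut (δi : Vin → A → Vout) (δo : Vout → B → Vin)
    (s : List (Vin ⊕ Vout) → Vin ⊕ Vout) (v : Vin ⊕ Vout) (p : ℕ → Vin ⊕ Vout) : Prop :=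
  p 0 = v ∧ (∀ n, UEdge δi δo (p n) (p (n + 1))) ∧
    ∀ n, (p n).isRight = true → p (n + 1) = s (hist p n)

/-- Player output has a winning strategy from `v₀` in the underlying parity game. -/
def OutWinsUnderlying (δi : Vin → A → Vout) (δo : Vout → B → Vin)
    (ci : Vin → ℕ) (co : Vout → ℕ) (v₀ : Vin) : Prop :=
  ∃ s, LegalOut δi δo s ∧ ∀ p, ConsOut δi δo s (Sum.inl v₀) p →
    OutWinsSeq (fun n => Sum.elim ci co (p n))

/-!
A play of the underlying game from `v₀` alternates between input and output nodes, so it is the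
interleaving of a sequence of input nodes `v` and output nodes `w`; choosing, via
`Function.invFun`, letters with `δi (v k) (x k) = w k` and `δo (w k) (y k) = v (k + 1)` turns it
into the play induced by `(x, y)`, with the same colors.

Given a causal `f`, output answers a history by decoding the input letters played so far and
moving along the letter `f x k`; causality makes the answer independent of the letters not yet
played, so every play consistent with this strategy is induced by `(x, f x)` for a single `x`.
Conversely, a legal strategy `s` played against the input word `x` yields the operator outputting
the labels of the edges that `s` chooses, and its `k`-th letter only depends on `x 0, …, x k`.
-/

theorem hist_succ (p : ℕ → Vin ⊕ Vout) (n : ℕ) :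
    hist p (n + 1) = hist p n ++ [p (n + 1)] := by
  rw [hist, List.ofFn_succ']
  simp [hist]

theorem length_hist (p : ℕ → Vin ⊕ Vout) (n : ℕ) : (hist p n).length = n + 1 := by
  simp [hist]

theorem getLast?_hist (p : ℕ → Vin ⊕ Vout) (n : ℕ) : (hist p n).getLast? = some (p n) := by
  cases n with
  | zero => simp [hist]
  | succ n => simp [hist_succ]

theorem getElem?_hist (p : ℕ → Vin ⊕ Vout) {n i : ℕ} (hi : i ≤ n) :
    (hist p n)[i]? = some (p i) := by
  rw [hist, List.getElem?_ofFn, dif_pos (Nat.lt_succ_of_le hi)]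

def interleave (v : ℕ → Vin) (w : ℕ → Vout) (n : ℕ) : Vin ⊕ Vout :=
  if n % 2 = 0 then Sum.inl (v (n / 2)) else Sum.inr (w (n / 2))

section Interleave

variable (v : ℕ → Vin) (w : ℕ → Vout) (k : ℕ)

@[simp] theorem interleave_two_mul : interleave v w (2 * k) = Sum.inl (v k) := by
  simp [interleave]

@[simp] theorem interleave_two_mul_add_one : interleave v w (2 * k + 1) = Sum.inr (w k) := by
  rw [interleave, if_neg (by omega), show (2 * k + 1) / 2 = k by omega]

@[simp] theorem interleave_two_mul_add_two : interleave v w (2 * k + 2) = Sum.inl (v (k + 1)) :=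
  interleave_two_mul v w (k + 1)

@[simp] theorem interleave_zero : interleave v w 0 = Sum.inl (v 0) :=
  interleave_two_mul v w 0

end Interleave

section UnderlyingGame

variable {δi : Vin → A → Vout} {δo : Vout → B → Vin}

theorem UEdge.exists_eq_inr {v : Vin} {q : Vin ⊕ Vout} (h : UEdge δi δo (Sum.inl v) q) :
    ∃ w, q = Sum.inr w := by
  cases q <;> simp_all [UEdge]

theorem UEdge.exists_eq_inl {w : Vout} {q : Vin ⊕ Vout} (h : UEdge δi δo (Sum.inr w) q) :
    ∃ v, q = Sum.inl v := by
  cases q <;> simp_all [UEdge]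

theorem exists_eq_interleave_of_uEdge {p : ℕ → Vin ⊕ Vout} {v₀ : Vin} (h0 : p 0 = Sum.inl v₀)
    (hp : ∀ n, UEdge δi δo (p n) (p (n + 1))) : ∃ v w, p = interleave v w := by
  have shape : ∀ k, ∃ v, p (2 * k) = Sum.inl v ∧ ∃ w, p (2 * k + 1) = Sum.inr w := by
    intro k
    induction k with
    | zero => exact ⟨v₀, h0, (h0 ▸ hp 0).exists_eq_inr⟩
    | succ k ih =>
      obtain ⟨-, -, w, hw⟩ := ih
      obtain ⟨v, hv⟩ := (hw ▸ hp (2 * k + 1)).exists_eq_inl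
      exact ⟨v, hv, (hv ▸ hp (2 * (k + 1))).exists_eq_inr⟩
  choose v hv w hw using shape
  refine ⟨v, w, funext fun n => ?_⟩
  obtain ⟨k, rfl | rfl⟩ := Nat.even_or_odd' n <;> simp [hv, hw]

theorem consOut_interleave_iff {s : List (Vin ⊕ Vout) → Vin ⊕ Vout} {v₀ : Vin}
    {v : ℕ → Vin} {w : ℕ → Vout} :
    ConsOut δi δo s (Sum.inl v₀) (interleave v w) ↔
      v 0 = v₀ ∧ ∀ k, (∃ σ, δi (v k) σ = w k) ∧ (∃ τ, δo (w k) τ = v (k + 1)) ∧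
        s (hist (interleave v w) (2 * k + 1)) = Sum.inl (v (k + 1)) := by
  constructor
  · rintro ⟨h0, hedge, hcons⟩
    refine ⟨by simpa using h0, fun k => ⟨?_, ?_, ?_⟩⟩
    · simpa [UEdge] using hedge (2 * k)
    · simpa [UEdge] using hedge (2 * k + 1)
    · simpa using (hcons (2 * k + 1) (by simp)).symm
  · rintro ⟨h0, hstep⟩
    refine ⟨by simp [h0], fun n => ?_, fun n hn => ?_⟩ <;>
      obtain ⟨k, rfl | rfl⟩ := Nat.even_or_odd' n
    · simpa [UEdge] using (hstep k).1
    · simpa [UEdge] using (hstep k).2.1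
    · simp at hn
    · simpa using ((hstep k).2.2).symm

theorem LegalOut.exists_eq_inl {s : List (Vin ⊕ Vout) → Vin ⊕ Vout} (hs : LegalOut δi δo s)
    {l : List (Vin ⊕ Vout)} {w : Vout} (hl : l.getLast? = some (Sum.inr w)) :
    ∃ τ, s l = Sum.inl (δo w τ) := by
  have h := hs l _ hl rfl
  obtain ⟨v, hv⟩ := h.exists_eq_inl
  rw [hv] at h ⊢
  obtain ⟨τ, rfl⟩ := h
  exact ⟨τ, rfl⟩

end UnderlyingGame

section InducedPlay

variable {δi : Vin → A → Vout} {δo : Vout → B → Vin} {v₀ : Vin} {x : ℕ → A} {y : ℕ → B}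

theorem pairPlay_eq {v : ℕ → Vin} (h0 : v 0 = v₀)
    (hstep : ∀ k, δo (δi (v k) (x k)) (y k) = v (k + 1)) : pairPlay δi δo v₀ x y = v := by
  funext k
  induction k with
  | zero => exact h0.symm
  | succ k ih => rw [pairPlay, ih, hstep]

theorem pairWinning_iff_of_pairPlay_eq {ci : Vin → ℕ} {co : Vout → ℕ} {v : ℕ → Vin}
    (hv : pairPlay δi δo v₀ x y = v) :
    PairWinning δi δo ci co v₀ x y ↔
      OutWinsSeq (fun n => Sum.elim ci co (interleave v (fun k => δi (v k) (x k)) n)) := by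
  subst hv
  unfold PairWinning pairColors interleave
  simp only [apply_ite (Sum.elim ci co), Sum.elim_inl, Sum.elim_inr]

end InducedPlay

section StrategyOfOperator

variable [Nonempty A] (δi : Vin → A → Vout) (δo : Vout → B → Vin)

noncomputable def decodeInput (h : List (Vin ⊕ Vout)) (j : ℕ) : A :=
  match h[2 * j]?, h[2 * j + 1]? with
  | some (Sum.inl v), some (Sum.inr w) => Function.invFun (δi v) w
  | _, _ => Classical.arbitrary A

noncomputable def strategyOfOperator (v₀ : Vin) (f : (ℕ → A) → ℕ → B)
    (h : List (Vin ⊕ Vout)) : Vin ⊕ Vout :=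
  -- a history ending at the `k`-th output node has length `2 * k + 2`
  match h.getLast? with
  | some (Sum.inr w) => Sum.inl (δo w (f (decodeInput δi h) (h.length / 2 - 1)))
  | _ => Sum.inl v₀

variable {δi δo}

theorem decodeInput_hist_interleave {v : ℕ → Vin} {w : ℕ → Vout} {n j : ℕ} (hj : 2 * j + 1 ≤ n) :
    decodeInput δi (hist (interleave v w) n) j = Function.invFun (δi (v j)) (w j) := by
  rw [decodeInput, getElem?_hist _ (by omega), getElem?_hist _ hj, interleave_two_mul,
    interleave_two_mul_add_one]

theorem legalOut_strategyOfOperator (v₀ : Vin) (f : (ℕ → A) → ℕ → B) :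
    LegalOut δi δo (strategyOfOperator δi δo v₀ f) := by
  rintro h (v | w) hlast hright
  · simp at hright
  · rw [strategyOfOperator, hlast]
    exact ⟨_, rfl⟩

theorem strategyOfOperator_hist_interleave {f : (ℕ → A) → ℕ → B} (hf : Causal f) (v₀ : Vin)
    (v : ℕ → Vin) (w : ℕ → Vout) (k : ℕ) :
    strategyOfOperator δi δo v₀ f (hist (interleave v w) (2 * k + 1)) =
      Sum.inl (δo (w k) (f (fun j => Function.invFun (δi (v j)) (w j)) k)) := by
  rw [strategyOfOperator, getLast?_hist, interleave_two_mul_add_one, length_hist,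
    show (2 * k + 1 + 1) / 2 - 1 = k by omega,
    hf _ _ k fun j hj => decodeInput_hist_interleave (by omega)]

end StrategyOfOperator

section OperatorOfStrategy

variable (δi : Vin → A → Vout) (v₀ : Vin) (s : List (Vin ⊕ Vout) → Vin ⊕ Vout)

def inducedHist (x : ℕ → A) : ℕ → List (Vin ⊕ Vout)
  | 0 => [Sum.inl v₀, Sum.inr (δi v₀ (x 0))]
  | k + 1 =>
    -- `v₀` only stands in for an illegal move of `s`
    let v := (s (inducedHist x k)).elim id fun _ => v₀
    inducedHist x k ++ [Sum.inl v, Sum.inr (δi v (x (k + 1)))]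

def inducedNode (x : ℕ → A) : ℕ → Vin
  | 0 => v₀
  | k + 1 => (s (inducedHist δi v₀ s x k)).elim id fun _ => v₀

noncomputable def operatorOfStrategy [Nonempty B] (δo : Vout → B → Vin) (x : ℕ → A) (k : ℕ) :
    B :=
  Function.invFun (δo (δi (inducedNode δi v₀ s x k) (x k))) (inducedNode δi v₀ s x (k + 1))

variable {δi v₀ s}

theorem inducedNode_succ (x : ℕ → A) (k : ℕ) :
    inducedNode δi v₀ s x (k + 1) = (s (inducedHist δi v₀ s x k)).elim id fun _ => v₀ :=
  rfl

theorem inducedHist_succ (x : ℕ → A) (k : ℕ) :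
    inducedHist δi v₀ s x (k + 1) = inducedHist δi v₀ s x k ++
      [Sum.inl (inducedNode δi v₀ s x (k + 1)),
        Sum.inr (δi (inducedNode δi v₀ s x (k + 1)) (x (k + 1)))] :=
  rfl

theorem inducedHist_eq_hist (x : ℕ → A) (k : ℕ) :
    inducedHist δi v₀ s x k = hist (interleave (inducedNode δi v₀ s x)
      (fun j => δi (inducedNode δi v₀ s x j) (x j))) (2 * k + 1) := by
  induction k with
  | zero => simp [inducedHist, hist, inducedNode, interleave]
  | succ k ih =>
    rw [inducedHist_succ, ih, hist_succ _ (2 * (k + 1)), show 2 * (k + 1) = 2 * k + 1 + 1 by ring,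
      hist_succ _ (2 * k + 1)]
    simp only [List.append_assoc, List.cons_append, List.nil_append, interleave_two_mul_add_two]
    rw [show 2 * k + 1 + 1 + 1 = 2 * (k + 1) + 1 by ring, interleave_two_mul_add_one]

theorem inducedHist_congr {x x' : ℕ → A} {k : ℕ} (h : ∀ j ≤ k, x j = x' j) :
    inducedHist δi v₀ s x k = inducedHist δi v₀ s x' k := by
  induction k with
  | zero => simp [inducedHist, h 0 le_rfl]
  | succ k ih => simp [inducedHist, ih fun j hj => h j (by omega), h (k + 1) le_rfl]

theorem inducedNode_congr {x x' : ℕ → A} {k : ℕ} (h : ∀ j < k, x j = x' j) :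
    inducedNode δi v₀ s x k = inducedNode δi v₀ s x' k := by
  cases k with
  | zero => rfl
  | succ k => simp only [inducedNode_succ, inducedHist_congr (k := k) fun j hj => h j (by omega)]

theorem causal_operatorOfStrategy [Nonempty B] (δo : Vout → B → Vin) :
    Causal (operatorOfStrategy δi v₀ s δo) := by
  intro x x' k h
  simp only [operatorOfStrategy, h k le_rfl, inducedNode_congr fun j hj => h j hj.le,
    inducedNode_congr (k := k + 1) fun j hj => h j (by omega)]

theorem LegalOut.apply_inducedHist {δo : Vout → B → Vin} (hs : LegalOut δi δo s) (x : ℕ → A)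
    (k : ℕ) : s (inducedHist δi v₀ s x k) = Sum.inl (inducedNode δi v₀ s x (k + 1)) ∧
      ∃ τ, δo (δi (inducedNode δi v₀ s x k) (x k)) τ = inducedNode δi v₀ s x (k + 1) := by
  obtain ⟨τ, hτ⟩ := hs.exists_eq_inl (l := inducedHist δi v₀ s x k)
    (w := δi (inducedNode δi v₀ s x k) (x k)) <| by
      rw [inducedHist_eq_hist, getLast?_hist, interleave_two_mul_add_one]
  have hnode : inducedNode δi v₀ s x (k + 1) = δo (δi (inducedNode δi v₀ s x k) (x k)) τ := by
    rw [inducedNode_succ, hτ]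
    rfl
  exact ⟨hnode ▸ hτ, τ, hnode.symm⟩

end OperatorOfStrategy

section Equivalence

variable {δi : Vin → A → Vout} {δo : Vout → B → Vin} {ci : Vin → ℕ} {co : Vout → ℕ} {v₀ : Vin}

theorem outWinsUnderlying_of_causal [Nonempty A] {f : (ℕ → A) → ℕ → B} (hf : Causal f)
    (hwin : ∀ x, PairWinning δi δo ci co v₀ x (f x)) : OutWinsUnderlying δi δo ci co v₀ := by
  refine ⟨strategyOfOperator δi δo v₀ f, legalOut_strategyOfOperator v₀ f, fun p hp => ?_⟩
  obtain ⟨v, w, rfl⟩ := exists_eq_interleave_of_uEdge hp.1 hp.2.1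
  obtain ⟨h0, hstep⟩ := consOut_interleave_iff.mp hp
  set x : ℕ → A := fun j => Function.invFun (δi (v j)) (w j)
  have hx : ∀ k, δi (v k) (x k) = w k := fun k => Function.invFun_eq (hstep k).1
  have hplay : pairPlay δi δo v₀ x (f x) = v := pairPlay_eq h0 fun k => by
    have hmove := (hstep k).2.2
    rw [strategyOfOperator_hist_interleave hf] at hmove
    rw [hx, Sum.inl_injective hmove]
  have hw : w = fun k => δi (v k) (x k) := funext fun k => (hx k).symm
  rw [hw]
  exact (pairWinning_iff_of_pairPlay_eq hplay).mp (hwin x)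

theorem exists_causal_of_outWinsUnderlying [Nonempty B] (h : OutWinsUnderlying δi δo ci co v₀) :
    ∃ f : (ℕ → A) → ℕ → B, Causal f ∧ ∀ x, PairWinning δi δo ci co v₀ x (f x) := by
  obtain ⟨s, hs, hwin⟩ := h
  refine ⟨operatorOfStrategy δi v₀ s δo, causal_operatorOfStrategy δo, fun x => ?_⟩
  have hplay : pairPlay δi δo v₀ x (operatorOfStrategy δi v₀ s δo x) = inducedNode δi v₀ s x :=
    pairPlay_eq rfl fun k => Function.invFun_eq (hs.apply_inducedHist x k).2
  rw [pairWinning_iff_of_pairPlay_eq hplay]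
  refine hwin _ (consOut_interleave_iff.mpr ⟨rfl, fun k => ?_⟩)
  obtain ⟨hmove, hedge⟩ := hs.apply_inducedHist x k
  exact ⟨⟨x k, rfl⟩, hedge, inducedHist_eq_hist x k ▸ hmove⟩

end Equivalence

theorem causal_operator_iff_output_wins_general
    [Nonempty A] [Nonempty B]
    (δi : Vin → A → Vout) (δo : Vout → B → Vin)
    (ci : Vin → ℕ) (co : Vout → ℕ) (v₀ : Vin) :
    (∃ f : (ℕ → A) → ℕ → B, Causal f ∧
        ∀ x, PairWinning δi δo ci co v₀ x (f x)) ↔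
      OutWinsUnderlying δi δo ci co v₀ :=
  ⟨fun ⟨_, hf, hwin⟩ => outWinsUnderlying_of_causal hf hwin, exists_causal_of_outWinsUnderlying⟩

/-- There is a causal operator implementing `R_𝒢` iff player output has a winning
strategy from `v₀` in the underlying parity game obtained by forgetting edge labels. -/
theorem causal_operator_iff_output_wins
    [Nonempty A] [Nonempty B]
    (δi : Vin → A → Vout) (δo : Vout → B → Vin)
    (ci : Vin → ℕ) (co : Vout → ℕ) (v₀ : Vin)
    (d : ℕ) (hci : ∀ v, ci v < d) (hco : ∀ w, co w < d) :
    (∃ f : (ℕ → A) → ℕ → B, Causal f ∧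
        ∀ x, PairWinning δi δo ci co v₀ x (f x)) ↔
      OutWinsUnderlying δi δo ci co v₀ :=
  causal_operator_iff_output_wins_general δi δo ci co v₀

end GCP
end

section
/- Let 𝒢 be an edge labelled parity game over Σin, Σout with transition function δ, and suppose φ : V_out → V_in is a uniform memoryless winning strategy for player output in the underlying parity game, whose winning region contains the initial node v₀, and suppose λ : V_out → Σout is a function with δ(w, λ(w)) = φ(w) for all w in the winning region. Define the transducer T with node set V_in, initial node v₀, and δ_T(v, σ) = (φ(δ(v, σ)), λ(δ(v, σ))). Then the causal operator f_T induced by T implements R_𝒢: for every x ∈ Σin^ω, the pair (x, f_T(x)) is winning for player output. -/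
section GCP

variable {Vin Vout A B : Type*}

/-- The input-nodes of the play from `v` against input word `x` when player output
follows the memoryless strategy `φ`. -/
def phiPlay (δi : Vin → A → Vout) (φ : Vout → Vin) (v : Vin) (x : ℕ → A) : ℕ → Vin
  | 0 => v
  | n + 1 => φ (δi (phiPlay δi φ v x n) (x n))

/-- The interleaved color sequence of the `φ`-play from `v` on input `x`. -/
def phiColors (δi : Vin → A → Vout) (φ : Vout → Vin)
    (ci : Vin → ℕ) (co : Vout → ℕ) (v : Vin) (x : ℕ → A) (n : ℕ) : ℕ :=
  if n % 2 = 0 then ci (phiPlay δi φ v x (n / 2))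
  else co (δi (phiPlay δi φ v x (n / 2)) (x (n / 2)))

/-- `v` is in the winning region of the memoryless output strategy `φ`:
every `φ`-play from `v` is winning for player output. -/
def WinFrom (δi : Vin → A → Vout) (φ : Vout → Vin)
    (ci : Vin → ℕ) (co : Vout → ℕ) (v : Vin) : Prop :=
  ∀ x : ℕ → A, OutWinsSeq (phiColors δi φ ci co v x)

/-!
Along a play that follows `φ`, every input node stays in the winning region of `φ`, since a
suffix of a `φ`-play is again a `φ`-play and the parity condition ignores finite prefixes. At
those nodes `lam` realizes the strategy edge, so the transducer's play coincides with the
`φ`-play on the same input and is therefore winning.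
-/

theorem OutWinsSeq.comp_add_right {q : ℕ → ℕ} (h : OutWinsSeq q) (k : ℕ) :
    OutWinsSeq (fun n => q (n + k)) := by
  obtain ⟨i, hi, hinf, hfin⟩ := h
  refine ⟨i, hi, ?_, fun j hj => (hfin j hj).preimage (add_left_injective k).injOn⟩
  rw [← Nat.frequently_atTop_iff_infinite] at hinf ⊢
  rwa [← Filter.map_add_atTop_eq_nat k, Filter.frequently_map] at hinf

def seqCons {α : Type*} (a : α) (x : ℕ → α) : ℕ → α
  | 0 => a
  | n + 1 => x n

section Strategy

variable (δi : Vin → A → Vout) (φ : Vout → Vin)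

theorem phiPlay_seqCons_succ (v : Vin) (a : A) (x : ℕ → A) :
    ∀ n, phiPlay δi φ v (seqCons a x) (n + 1) = phiPlay δi φ (φ (δi v a)) x n
  | 0 => rfl
  | n + 1 => by
    rw [phiPlay, phiPlay_seqCons_succ v a x n, phiPlay]
    rfl

theorem phiColors_seqCons_add_two (ci : Vin → ℕ) (co : Vout → ℕ) (v : Vin) (a : A) (x : ℕ → A)
    (n : ℕ) :
    phiColors δi φ ci co v (seqCons a x) (n + 2) = phiColors δi φ ci co (φ (δi v a)) x n := by
  have hdiv : (n + 2) / 2 = n / 2 + 1 := by omega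
  have hmod : (n + 2) % 2 = n % 2 := by omega
  simp only [phiColors, hdiv, hmod, phiPlay_seqCons_succ]
  rfl

variable {δi φ} {ci : Vin → ℕ} {co : Vout → ℕ}

theorem WinFrom.strategy_step {v : Vin} (h : WinFrom δi φ ci co v) (a : A) :
    WinFrom δi φ ci co (φ (δi v a)) := fun x => by
  simpa only [phiColors_seqCons_add_two] using (h (seqCons a x)).comp_add_right 2

theorem WinFrom.phiPlay {v : Vin} (h : WinFrom δi φ ci co v) (x : ℕ → A) :
    ∀ n, WinFrom δi φ ci co (phiPlay δi φ v x n)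
  | 0 => h
  | n + 1 => (h.phiPlay x n).strategy_step (x n)

end Strategy

theorem pairPlay_eq_phiPlay {δi : Vin → A → Vout} {δo : Vout → B → Vin} {φ : Vout → Vin}
    {v : Vin} {x : ℕ → A} {y : ℕ → B}
    (hy : ∀ n, δo (δi (phiPlay δi φ v x n) (x n)) (y n) = φ (δi (phiPlay δi φ v x n) (x n))) :
    pairPlay δi δo v x y = phiPlay δi φ v x := by
  funext n
  induction n with
  | zero => rfl
  | succ n ih => rw [pairPlay, phiPlay, ih, hy]

/-- If `φ` is a memoryless winning strategy for player output whose winning region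
contains `v₀`, and `lam` picks for each output node in the winning region a letter
realizing the strategy edge (`δo w (lam w) = φ w`), then the causal operator induced
by the transducer `δ_T(v, σ) = (φ (δi v σ), lam (δi v σ))` implements `R_𝒢`:
for every input `x`, the pair `(x, f_T x)` is winning for player output. -/
theorem transducer_from_strategy_implements
    (δi : Vin → A → Vout) (δo : Vout → B → Vin)
    (ci : Vin → ℕ) (co : Vout → ℕ) (v₀ : Vin)
    (φ : Vout → Vin) (lam : Vout → B)
    (hv₀ : WinFrom δi φ ci co v₀)
    (hlam : ∀ w : Vout, WinFrom δi φ ci co (φ w) → δo w (lam w) = φ w) :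
    ∀ x : ℕ → A,
      OutWinsSeq (pairColors δi δo ci co v₀ x
        (fun n => lam (δi (phiPlay δi φ v₀ x n) (x n)))) := by
  intro x
  have hplay : pairPlay δi δo v₀ x (fun n => lam (δi (phiPlay δi φ v₀ x n) (x n))) =
      phiPlay δi φ v₀ x :=
    pairPlay_eq_phiPlay fun n => hlam _ (hv₀.phiPlay x (n + 1))
  have hcolors : pairColors δi δo ci co v₀ x (fun n => lam (δi (phiPlay δi φ v₀ x n) (x n))) =
      phiColors δi φ ci co v₀ x := by
    funext n
    simp only [pairColors, phiColors, hplay]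
  exact hcolors ▸ hv₀ x

end GCP
end
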